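/- Let MT be a tree of order n ≥ 3 with maximum degree at most 4, and for 1 ≤ i ≤ j ≤ 4 let m_{ij} denote the number of edges of MT whose endpoints have degrees i and j. Then SO₅(MT)/(2π) = (f(1,4)+f(2,4))·n/2 + (3f(1,4) − 5f(2,4))/2 + m₁₂·(f(1,2) − (3/2)f(1,4) + (1/2)f(2,4)) + m₁₃·(f(1,3) − (7/6)f(1,4) + (1/6)f(2,4)) − m₂₂·((1/2)f(1,4) + (1/2)f(2,4)) + m₂₃·(f(2,3) − (1/6)f(1,4) − (5/6)f(2,4)) + m₃₃·((1/6)f(1,4) − (7/6)f(2,4)) + m₃₄·(f(3,4) + (1/3)f(1,4) − (4/3)f(2,4)) + m₄₄·((1/2)f(1,4) − (3/2)f(2,4)). -/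

import Mathlib

/-- `f a b = |a² − b²| / (√2 + 2√(a² + b²))`. -/
noncomputable def f (a b : ℝ) : ℝ :=
  |a ^ 2 - b ^ 2| / (Real.sqrt 2 + 2 * Real.sqrt (a ^ 2 + b ^ 2))

theorem f_symm (a b : ℝ) : f a b = f b a := by
  unfold f; rw [abs_sub_comm, add_comm (a ^ 2)]

/-- The Sombor-index-like invariant `SO₅(G) = 2π · Σ_{uv ∈ E(G)} f(d(u), d(v))`. -/
noncomputable def SO5 {V : Type*} [Fintype V] [DecidableEq V] (G : SimpleGraph V)
    [DecidableRel G.Adj] : ℝ :=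
  2 * Real.pi * ∑ e ∈ G.edgeFinset,
    Sym2.lift ⟨fun u v => f (G.degree u) (G.degree v),
      fun u v => f_symm (G.degree u) (G.degree v)⟩ e

open scoped Classical in
/-- `edgeCnt G i j` is the number of edges of `G` whose endpoints have degrees `i` and `j`. -/
noncomputable def edgeCnt {V : Type*} [Fintype V] [DecidableEq V] (G : SimpleGraph V)
    [DecidableRel G.Adj] (i j : ℕ) : ℕ :=
  (G.edgeFinset.filter fun e =>
    Sym2.lift ⟨fun u v => (G.degree u = i ∧ G.degree v = j) ∨ (G.degree u = j ∧ G.degree v = i),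
      fun u v => propext (by tauto)⟩ e).card

/-!
Group the edges by the unordered pair `{d(u), d(v)}` of endpoint degrees, which lies in
`{1, …, 4}`; since `f(i, i) = 0`, `SO₅/(2π) = ∑ m_{ij} f(i, j)` over `i < j`. In a tree of order
`n ≥ 3` the counts satisfy `∑ m_{ij} = n - 1`, `∑ m_{ij} (1/i + 1/j) = n` (every vertex `v`
contributes `d(v) · 1/d(v)`), and `m₁₁ = 0`, as two adjacent leaves would make up the whole tree.
Eliminating `m₁₄` and `m₂₄` with these relations gives the identity.
-/

open Finset

theorem f_self (a : ℝ) : f a a = 0 := by simp [f]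

theorem Finset.sum_sym2_Icc_one_four {M : Type*} [AddCommMonoid M] (g : Sym2 ℕ → M) :
    ∑ p ∈ (Icc 1 4).sym2, g p = g s(1, 1) + g s(1, 2) + g s(1, 3) + g s(1, 4) + g s(2, 2)
      + g s(2, 3) + g s(2, 4) + g s(3, 3) + g s(3, 4) + g s(4, 4) := by
  rw [show (Icc 1 4).sym2 = {s(1, 1), s(1, 2), s(1, 3), s(1, 4), s(2, 2), s(2, 3), s(2, 4),
    s(3, 3), s(3, 4), s(4, 4)} by decide]
  simp [add_assoc]

namespace SimpleGraph

variable {V : Type*} [Fintype V] (G : SimpleGraph V) [DecidableRel G.Adj]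

theorem sum_edgeFinset_lift_add {M : Type*} [AddCommMonoid M] (φ : V → M) :
    ∑ e ∈ G.edgeFinset, Sym2.lift ⟨fun u v => φ u + φ v, fun _ _ => add_comm _ _⟩ e
      = ∑ v, G.degree v • φ v := by
  classical
  calc ∑ e ∈ G.edgeFinset, Sym2.lift ⟨fun u v => φ u + φ v, fun _ _ => add_comm _ _⟩ e
      = ∑ d : G.Dart, φ d.fst := by
        rw [← sum_fiberwise_of_maps_to (t := G.edgeFinset) (g := Dart.edge)
          fun d _ => mem_edgeFinset.2 d.edge_mem]
        refine sum_congr rfl fun e he => ?_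
        induction e with
        | h u v =>
          let d : G.Dart := ⟨(u, v), mem_edgeFinset.1 he⟩
          rw [show s(u, v) = d.edge from rfl, d.edge_fiber, sum_pair d.symm_ne.symm]
          rfl
    _ = ∑ v, G.degree v • φ v := by
        rw [← sum_fiberwise univ fun d : G.Dart => d.fst]
        refine sum_congr rfl fun v _ => ?_
        rw [sum_congr rfl fun d hd => by rw [(mem_filter.1 hd).2], sum_const]
        exact congrArg (· • φ v) (G.dart_fst_fiber_card_eq_degree v)

theorem sum_edgeFinset_inv_degree_add (hpos : ∀ v, 0 < G.degree v) :
    ∑ e ∈ G.edgeFinset, Sym2.lift ⟨fun u v => (G.degree u : ℝ)⁻¹ + (G.degree v : ℝ)⁻¹,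
      fun _ _ => add_comm _ _⟩ e = Fintype.card V := by
  rw [sum_edgeFinset_lift_add, ← card_univ, cast_card]
  refine sum_congr rfl fun v _ => ?_
  rw [nsmul_eq_mul, mul_inv_cancel₀ (Nat.cast_ne_zero.2 (hpos v).ne')]

variable {G} in
theorem Preconnected.card_le_two_of_adj_of_degree_eq_one (hG : G.Preconnected) {u v : V}
    (huv : G.Adj u v) (hu : G.degree u = 1) (hv : G.degree v = 1) : Fintype.card V ≤ 2 := by
  classical
  have hclosed : ∀ a b, G.Adj a b → a ∈ ({u, v} : Set V) → b ∈ ({u, v} : Set V) := by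
    rintro a b hab (rfl | rfl)
    · exact .inr ((degree_eq_one_iff_existsUnique_adj.1 hu).unique hab huv)
    · exact .inl ((degree_eq_one_iff_existsUnique_adj.1 hv).unique hab huv.symm)
  have hall : ∀ w, w ∈ ({u, v} : Finset V) := fun w => by
    by_contra hw
    obtain ⟨d, -, hd, hd'⟩ :=
      (hG u w).some.exists_boundary_dart {u, v} (.inl rfl) (by simpa using hw)
    exact hd' (hclosed _ _ d.adj hd)
  calc Fintype.card V = #({u, v} : Finset V) := by rw [eq_univ_of_forall hall, card_univ]
    _ ≤ 2 := card_le_two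

def degreePairCount (p : Sym2 ℕ) : ℕ := #{e ∈ G.edgeFinset | e.map (fun v => G.degree v) = p}

theorem edgeCnt_eq_degreePairCount [DecidableEq V] (i j : ℕ) :
    edgeCnt G i j = G.degreePairCount s(i, j) := by
  classical
  unfold edgeCnt degreePairCount
  congr 1
  refine filter_congr fun e _ => ?_
  induction e with
  | h u v => simp

theorem degreePairCount_one_one (hG : G.Preconnected) (hV : 3 ≤ Fintype.card V) :
    G.degreePairCount s(1, 1) = 0 := by
  refine card_eq_zero.2 (filter_eq_empty_iff.2 fun e he => ?_)
  induction e with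
  | h u v =>
    simp only [Sym2.map_mk, Sym2.eq_iff, or_self]
    rintro ⟨hu, hv⟩
    have := hG.card_le_two_of_adj_of_degree_eq_one (mem_edgeFinset.1 he) hu hv
    omega

variable {k : ℕ} (hpos : ∀ v, 0 < G.degree v) (hle : ∀ v, G.degree v ≤ k)
include hpos hle

theorem map_degree_mem_sym2_Icc (e : Sym2 V) :
    e.map (fun v => G.degree v) ∈ (Icc 1 k).sym2 := by
  simp only [mem_sym2_iff, Sym2.mem_map, mem_Icc]
  rintro _ ⟨v, -, rfl⟩
  exact ⟨hpos v, hle v⟩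

theorem card_edgeFinset_eq_sum_degreePairCount :
    #G.edgeFinset = ∑ p ∈ (Icc 1 k).sym2, G.degreePairCount p :=
  card_eq_sum_card_fiberwise fun e _ => G.map_degree_mem_sym2_Icc hpos hle e

theorem sum_edgeFinset_lift_degree {M : Type*} [AddCommMonoid M] (h : ℕ → ℕ → M)
    (hh : ∀ a b, h a b = h b a) :
    ∑ e ∈ G.edgeFinset, Sym2.lift ⟨fun u v => h (G.degree u) (G.degree v), fun _ _ => hh _ _⟩ e
      = ∑ p ∈ (Icc 1 k).sym2, G.degreePairCount p • Sym2.lift ⟨h, hh⟩ p := by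
  rw [sum_congr rfl fun e _ => (Sym2.lift_map_apply ⟨h, hh⟩ e).symm,
    ← sum_fiberwise_of_maps_to' fun e _ => G.map_degree_mem_sym2_Icc hpos hle e]
  exact sum_congr rfl fun p _ => sum_const _

end SimpleGraph

/-- Identity (2) of the paper: expression of `SO₅(MT)/(2π)` for a molecular tree `MT` of
order `n` in terms of the edge counts `m_{ij}`. -/
theorem SO5_molecular_tree_identity {V : Type*} [Fintype V] [DecidableEq V]
    (G : SimpleGraph V) [DecidableRel G.Adj] (hT : G.IsTree) (hdeg : ∀ v : V, G.degree v ≤ 4)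
    (n : ℕ) (hn : Fintype.card V = n) (hn3 : 3 ≤ n) :
    SO5 G / (2 * Real.pi) =
      (f 1 4 + f 2 4) / 2 * n + (3 * f 1 4 - 5 * f 2 4) / 2
      + (edgeCnt G 1 2 : ℝ) * (f 1 2 - 3 / 2 * f 1 4 + 1 / 2 * f 2 4)
      + (edgeCnt G 1 3 : ℝ) * (f 1 3 - 7 / 6 * f 1 4 + 1 / 6 * f 2 4)
      - (edgeCnt G 2 2 : ℝ) * (1 / 2 * f 1 4 + 1 / 2 * f 2 4)
      + (edgeCnt G 2 3 : ℝ) * (f 2 3 - 1 / 6 * f 1 4 - 5 / 6 * f 2 4)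
      + (edgeCnt G 3 3 : ℝ) * (1 / 6 * f 1 4 - 7 / 6 * f 2 4)
      + (edgeCnt G 3 4 : ℝ) * (f 3 4 + 1 / 3 * f 1 4 - 4 / 3 * f 2 4)
      + (edgeCnt G 4 4 : ℝ) * (1 / 2 * f 1 4 - 3 / 2 * f 2 4) := by
  subst hn
  have hconn := hT.connected.preconnected
  have : Nontrivial V := Fintype.one_lt_card_iff_nontrivial.1 (by omega)
  have hpos : ∀ v, 0 < G.degree v := fun v => hconn.degree_pos_of_nontrivial v
  have h11 := G.degreePairCount_one_one hconn hn3
  have hedges : (#G.edgeFinset : ℝ) + 1 = Fintype.card V := by exact_mod_cast hT.card_edgeFinset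
  rw [G.card_edgeFinset_eq_sum_degreePairCount hpos hdeg, Nat.cast_sum] at hedges
  have hinv := G.sum_edgeFinset_inv_degree_add hpos
  rw [G.sum_edgeFinset_lift_degree hpos hdeg (fun a b : ℕ => (a : ℝ)⁻¹ + (b : ℝ)⁻¹)
    fun _ _ => add_comm _ _] at hinv
  rw [SO5, mul_div_cancel_left₀ _ (by positivity),
    G.sum_edgeFinset_lift_degree hpos hdeg (fun a b : ℕ => f a b) fun _ _ => f_symm _ _]
  simp only [G.edgeCnt_eq_degreePairCount, sum_sym2_Icc_one_four] at hedges hinv ⊢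
  norm_num [f_self, h11] at hedges hinv ⊢
  linear_combination (5 / 2 * f 2 4 - 3 / 2 * f 1 4) * hedges + (2 * f 1 4 - 2 * f 2 4) * hinv
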